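/- Let T be a tree on a finite nonempty vertex type V with n = |V| vertices, and let m ≥ 1 be an integer. Let G be the m-order Type-II growth graph of T. Then the Wiener index of G satisfies W(G) = (2m+1)^2·W(T) + m(2m+1)·n^2 − m(5m+3)·n + m(3m+2). -/

import Mathlib

/-- The Wiener index of a finite simple graph: half the sum of the graph
distances over all ordered pairs of vertices. -/
noncomputable def wienerIndex {V : Type*} [Fintype V] (G : SimpleGraph V) : ℚ :=
  (∑ u : V, ∑ v : V, (G.dist u v : ℚ)) / 2

/-- The `m`-order Type-II growth graph of `T`:
attach `m * deg_T u` new pendant leaves to every vertex `u` of `T`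
(one group of `m` leaves for each dart with tail `u`). -/
def typeIIGrowth {V : Type*} (T : SimpleGraph V) (m : ℕ) :
    SimpleGraph (V ⊕ (T.Dart × Fin m)) :=
  SimpleGraph.fromRel (fun x y =>
    match x, y with
    | Sum.inl u, Sum.inl v => T.Adj u v
    | Sum.inl u, Sum.inr (d, _) => d.fst = u
    | _, _ => False)

/-!
Distances in the growth graph reduce to distances in `T`: the copy of `T` is isometric, a new
leaf lies one step beyond the tail of its dart, and two distinct leaves lie at the tree distance
of their tails plus two. Summing over the four kinds of pairs expresses `W(G)` through
`∑ d(u, v)`, `∑ d(u, tail e)` and `∑ d(tail e, tail f)`. In a tree, each vertex `v ≠ u` is the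
far end, seen from `u`, of exactly the two darts along its edge towards `u`, so
`∑_e d(u, tail e) = 2 ∑_v d(u, v) - (n - 1)`, which turns both dart sums into multiples of `W(T)`
up to explicit polynomials in `n`.
-/

open Finset

namespace SimpleGraph

variable {V W : Type*} {G : SimpleGraph V}

lemma Reachable.exists_adj_dist_add_one_eq {u x : V} (h : G.Reachable u x) (hx : x ≠ u) :
    ∃ p, G.Adj p x ∧ G.dist u p + 1 = G.dist u x := by
  obtain ⟨w, hw⟩ := h.symm.exists_walk_length_eq_dist
  cases w with
  | nil => exact absurd rfl hx
  | @cons _ p _ hxp q =>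
    refine ⟨p, hxp.symm, le_antisymm ?_ ?_⟩
    · have := dist_le q.reverse
      rw [dist_comm (v := x), ← hw]
      simpa using this
    · exact hxp.symm.reachable.dist_triangle_right u |>.trans
        (by simp [dist_eq_one_iff_adj.2 hxp.symm])

lemma dist_le_length_of_adj_imp {H : SimpleGraph W} (f : V → W)
    (hf : ∀ ⦃x y⦄, G.Adj x y → H.Adj (f x) (f y) ∨ f x = f y) {x y : V} (p : G.Walk x y) :
    H.dist (f x) (f y) ≤ p.length := by
  induction p with
  | nil => simp
  | @cons a b c hab q ih =>
    rcases hf hab with h | h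
    · exact (h.reachable.dist_triangle_left _).trans
        (by rw [dist_eq_one_iff_adj.2 h, Walk.length_cons]; omega)
    · simp only [h, Walk.length_cons]; omega

lemma dist_eq_dist_add_one_of_forall_adj_iff {x y w : V} (hy : ∀ z, G.Adj y z ↔ z = w)
    (hr : G.Reachable x w) (hxy : x ≠ y) : G.dist x y = G.dist x w + 1 := by
  have hyw : G.Adj y w := (hy w).2 rfl
  obtain ⟨p, hpx, hp⟩ := (hr.trans hyw.symm.reachable).exists_adj_dist_add_one_eq hxy.symm
  obtain rfl := (hy p).1 hpx.symm
  exact hp.symm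

namespace IsTree
variable [Fintype V] [DecidableRel G.Adj]

lemma card_dart (hG : G.IsTree) : (Fintype.card G.Dart : ℚ) = 2 * (Fintype.card V - 1) := by
  rw [dart_card_eq_twice_card_edges, ← hG.card_edgeFinset]
  push_cast
  ring

lemma sum_dist_dart_fst (hG : G.IsTree) (u : V) :
    ∑ d : G.Dart, (G.dist u d.fst : ℚ) = 2 * ∑ v, (G.dist u v : ℚ) - (Fintype.card V - 1) := by
  classical
  have h_adj (d : G.Dart) := hG.dist_eq_dist_add_one_of_adj u d.adj
  -- `v ≠ u` is the far end of exactly the two darts along its edge towards `u`; since both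
  -- sides have `2 (n - 1)` elements, surjectivity suffices.
  let F (d : G.Dart) : {v // v ≠ u} ⊕ {v // v ≠ u} :=
    if h : G.dist u d.fst < G.dist u d.snd then
      .inl ⟨d.snd, by rintro rfl; simp at h⟩
    else
      .inr ⟨d.fst, by intro hu; have := h_adj d; rw [hu, dist_self] at this h; omega⟩
  have hF : F.Bijective := by
    refine (Fintype.bijective_iff_surjective_and_card F).2 ⟨?_, ?_⟩
    · rintro (⟨v, hv⟩ | ⟨v, hv⟩) <;>
        obtain ⟨p, hpv, hp⟩ := (hG.connected u v).exists_adj_dist_add_one_eq hv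
      · exact ⟨⟨(p, v), hpv⟩, by simp [F, ← hp]⟩
      · exact ⟨⟨(v, p), hpv.symm⟩, by simp [F, ← hp]⟩
    · rw [dart_card_eq_twice_card_edges, Fintype.card_sum, Fintype.card_subtype_compl,
        Fintype.card_subtype_eq, ← hG.card_edgeFinset]
      omega
  rw [Fintype.sum_bijective F hF _ (Sum.elim (fun v ↦ (G.dist u v : ℚ) - 1) (fun v ↦ G.dist u v)),
    Fintype.sum_sum_type, Fintype.sum_eq_add_sum_subtype_ne _ u]
  · simp only [Sum.elim_inl, Sum.elim_inr, dist_self, Nat.cast_zero, zero_add, sum_sub_distrib,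
      sum_const, card_univ, nsmul_one]
    rw [Fintype.card_subtype_compl, Fintype.card_subtype_eq,
      Nat.cast_sub (Fintype.card_pos_iff.2 ⟨u⟩)]
    ring
  · intro d
    by_cases h : G.dist u d.fst < G.dist u d.snd
    · have : G.dist u d.snd = G.dist u d.fst + 1 := by have := h_adj d; omega
      simp [F, this]
    · simp [F, h]

lemma sum_sum_dist_dart_fst (hG : G.IsTree) :
    ∑ u, ∑ d : G.Dart, (G.dist u d.fst : ℚ) =
      2 * ∑ u, ∑ v, (G.dist u v : ℚ) - Fintype.card V * (Fintype.card V - 1) := by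
  simp only [hG.sum_dist_dart_fst, sum_sub_distrib, ← mul_sum, sum_const, card_univ, nsmul_eq_mul]
  ring

lemma sum_sum_dist_dart_fst_dart_fst (hG : G.IsTree) :
    ∑ d : G.Dart, ∑ e : G.Dart, (G.dist d.fst e.fst : ℚ) =
      4 * ∑ u, ∑ v, (G.dist u v : ℚ) - 2 * Fintype.card V * (Fintype.card V - 1)
        - 2 * (Fintype.card V - 1) ^ 2 := by
  have h_comm :
      ∑ d : G.Dart, ∑ v, (G.dist d.fst v : ℚ) = ∑ v, ∑ d : G.Dart, (G.dist v d.fst : ℚ) := by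
    rw [sum_comm]; simp only [dist_comm]
  simp only [hG.sum_dist_dart_fst, sum_sub_distrib, ← mul_sum, sum_const, card_univ, nsmul_eq_mul]
  rw [h_comm, hG.sum_sum_dist_dart_fst, hG.card_dart]
  ring

end IsTree

end SimpleGraph

open SimpleGraph

namespace typeIIGrowth

variable {V : Type*} {T : SimpleGraph V} {m : ℕ}

@[simp]
lemma adj_inl_inl {u v : V} : (typeIIGrowth T m).Adj (.inl u) (.inl v) ↔ T.Adj u v := by
  simp +contextual [typeIIGrowth, T.adj_comm, T.ne_of_adj]

@[simp]
lemma adj_inl_inr {u : V} {p : T.Dart × Fin m} :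
    (typeIIGrowth T m).Adj (.inl u) (.inr p) ↔ p.1.fst = u := by
  simp [typeIIGrowth]

lemma adj_inr_iff {p : T.Dart × Fin m} {x : V ⊕ (T.Dart × Fin m)} :
    (typeIIGrowth T m).Adj (.inr p) x ↔ x = .inl p.1.fst := by
  rcases x with u | q
  · simp [adj_comm, eq_comm]
  · simp [typeIIGrowth]

def inlHom (T : SimpleGraph V) (m : ℕ) : T →g typeIIGrowth T m where
  toFun := .inl
  map_rel' := adj_inl_inl.2

def root : V ⊕ (T.Dart × Fin m) → V :=
  Sum.elim id fun p ↦ p.1.fst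

lemma reachable_inl_root (x : V ⊕ (T.Dart × Fin m)) :
    (typeIIGrowth T m).Reachable x (.inl (root x)) := by
  rcases x with u | p
  · rfl
  · exact (adj_inr_iff.2 rfl).reachable

lemma adj_root_or_eq {x y : V ⊕ (T.Dart × Fin m)} (h : (typeIIGrowth T m).Adj x y) :
    T.Adj (root x) (root y) ∨ root x = root y := by
  rcases x with u | p <;> rcases y with v | q
  · exact .inl (adj_inl_inl.1 h)
  · simp_all [root]
  · simp_all [root, adj_inr_iff]
  · simp_all [adj_inr_iff]

lemma reachable (hT : T.Connected) (x y : V ⊕ (T.Dart × Fin m)) :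
    (typeIIGrowth T m).Reachable x y :=
  (reachable_inl_root x).trans <| ((hT _ _).map (inlHom T m)).trans (reachable_inl_root y).symm

lemma dist_inl_inl (hT : T.Connected) (u v : V) :
    (typeIIGrowth T m).dist (.inl u) (.inl v) = T.dist u v := by
  refine le_antisymm ?_ ?_
  · obtain ⟨p, hp⟩ := hT.exists_walk_length_eq_dist u v
    exact (dist_le (p.map (inlHom T m))).trans_eq (by rw [Walk.length_map, hp])
  · obtain ⟨p, hp⟩ := (reachable hT (m := m) (.inl u) (.inl v)).exists_walk_length_eq_dist
    rw [← hp]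
    -- Collapsing every leaf onto its neighbour does not lengthen walks.
    exact dist_le_length_of_adj_imp root (fun _ _ ↦ adj_root_or_eq) p

lemma dist_inr (hT : T.Connected) {x : V ⊕ (T.Dart × Fin m)} {p : T.Dart × Fin m}
    (hx : x ≠ .inr p) :
    (typeIIGrowth T m).dist x (.inr p) = (typeIIGrowth T m).dist x (.inl p.1.fst) + 1 :=
  dist_eq_dist_add_one_of_forall_adj_iff (fun _ ↦ adj_inr_iff) (reachable hT _ _) hx

lemma dist_inl_inr (hT : T.Connected) (u : V) (p : T.Dart × Fin m) :
    (typeIIGrowth T m).dist (.inl u) (.inr p) = T.dist u p.1.fst + 1 := by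
  rw [dist_inr hT Sum.inl_ne_inr, dist_inl_inl hT]

lemma dist_inr_inr (hT : T.Connected) {p q : T.Dart × Fin m} (hpq : p ≠ q) :
    (typeIIGrowth T m).dist (.inr p) (.inr q) = T.dist p.1.fst q.1.fst + 2 := by
  rw [dist_inr hT (by simpa using hpq), dist_comm, dist_inl_inr hT, dist_comm]

section Sums
variable [Fintype V] [DecidableRel T.Adj]

lemma sum_sum_dist_inl_inr (hT : T.Connected) :
    ∑ u, ∑ p, ((typeIIGrowth T m).dist (.inl u) (.inr p) : ℚ) =
      m * (∑ u, ∑ d : T.Dart, (T.dist u d.fst : ℚ) + Fintype.card V * Fintype.card T.Dart) := by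
  simp only [dist_inl_inr hT, Nat.cast_add, Nat.cast_one, sum_add_distrib, Fintype.sum_prod_type,
    sum_const, card_univ, Fintype.card_fin, nsmul_eq_mul, mul_one, ← mul_sum, Fintype.card_prod]
  push_cast
  ring

lemma sum_sum_dist_inr_inr (hT : T.Connected) :
    ∑ p, ∑ q, ((typeIIGrowth T m).dist (.inr p) (.inr q) : ℚ) =
      m ^ 2 * ∑ d : T.Dart, ∑ e : T.Dart, (T.dist d.fst e.fst : ℚ)
        + 2 * (m * Fintype.card T.Dart) ^ 2 - 2 * m * Fintype.card T.Dart := by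
  classical
  have h (p q : T.Dart × Fin m) : ((typeIIGrowth T m).dist (.inr p) (.inr q) : ℚ) =
      T.dist p.1.fst q.1.fst + 2 - if p = q then 2 else 0 := by
    by_cases hpq : p = q
    · simp [hpq]
    · simp [dist_inr_inr hT hpq, hpq]
  simp only [h, sum_sub_distrib, sum_add_distrib, sum_ite_eq, mem_univ, if_true, sum_const,
    card_univ, nsmul_eq_mul, Fintype.card_prod, Fintype.card_fin]
  simp only [Fintype.sum_prod_type, sum_const, card_univ, Fintype.card_fin, nsmul_eq_mul, ← mul_sum]
  push_cast
  ring

lemma sum_sum_dist (hT : T.Connected) :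
    ∑ x, ∑ y, ((typeIIGrowth T m).dist x y : ℚ) =
      ∑ u, ∑ v, (T.dist u v : ℚ)
        + 2 * m * (∑ u, ∑ d : T.Dart, (T.dist u d.fst : ℚ) + Fintype.card V * Fintype.card T.Dart)
        + m ^ 2 * ∑ d : T.Dart, ∑ e : T.Dart, (T.dist d.fst e.fst : ℚ)
        + 2 * (m * Fintype.card T.Dart) ^ 2 - 2 * m * Fintype.card T.Dart := by
  have h_rl : ∑ p, ∑ u, ((typeIIGrowth T m).dist (.inr p) (.inl u) : ℚ) =
      ∑ u, ∑ p, ((typeIIGrowth T m).dist (.inl u) (.inr p) : ℚ) := by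
    rw [sum_comm]; simp only [dist_comm]
  simp only [Fintype.sum_sum_type, sum_add_distrib, dist_inl_inl hT]
  rw [h_rl, sum_sum_dist_inl_inr hT, sum_sum_dist_inr_inr hT]
  ring

end Sums
end typeIIGrowth

theorem wiener_typeIIGrowth {V : Type*} [Fintype V]
    (T : SimpleGraph V) [DecidableRel T.Adj] (hT : T.IsTree) (m : ℕ) :
    wienerIndex (typeIIGrowth T m) =
      (2 * (m : ℚ) + 1) ^ 2 * wienerIndex T
        + (m : ℚ) * (2 * (m : ℚ) + 1) * (Fintype.card V : ℚ) ^ 2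
        - (m : ℚ) * (5 * (m : ℚ) + 3) * (Fintype.card V : ℚ)
        + (m : ℚ) * (3 * (m : ℚ) + 2) := by
  rw [wienerIndex, wienerIndex, typeIIGrowth.sum_sum_dist hT.connected,
    hT.sum_sum_dist_dart_fst, hT.sum_sum_dist_dart_fst_dart_fst, hT.card_dart]
  ring
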